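/- Let Φ be a finite crystallographic root system with simple system Π and Weyl group W, and suppose (v,w) ∈ C⁽²⁾ (the fundamental region in V²) with both v and w roots of Φ. If ⟨v,w⟩ ≠ 0 and v,w are linearly independent, then v is a dominant root (lies in the fundamental chamber) and, in the case C''((v,w)) equals the A₂ Cartan matrix (i.e. ⟨v∨,w⟩ = ⟨w∨,v⟩ = −1), w is the negative of a simple root. -/

import Mathlib

/-!
Dominance of `v` is the chamber condition of `C⁽²⁾` in the first coordinate. In the `A₂` case
`β = -w` is a positive root with `‖β‖² = ‖v‖² = 2⟪v, β⟫`, and the condition in the second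
coordinate says `⟪β, α⟫ ≤ 0` for every positive root `α ⟂ v`. If `β` were not simple, some
simple root `x` in its support has `⟪β, x⟫ > 0`, and `s_x β` is again a positive root. Since
`x ⟂ v` is excluded, `⟪v, x⟫ > 0`. For crystallographic roots a positive inner product forces
`2⟪α, γ⟫ ≥ ‖γ‖²`, so dominance `⟪v, s_x β⟫ ≥ 0` pins down `s_x β = β - x`, `s_x β ⟂ v` and
`‖x‖² ≤ ‖v‖²`; then `⟪β, s_x β⟫ ≥ ‖v‖² / 2 > 0` contradicts the second condition.
-/

open scoped RealInnerProductSpace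

variable {V : Type*} [NormedAddCommGroup V] [InnerProductSpace ℝ V] [FiniteDimensional ℝ V]

/-- Orthogonal reflection in the (nonzero) vector `α`. -/
noncomputable def sref (α : V) : V ≃ₗᵢ[ℝ] V := Submodule.reflection (ℝ ∙ α)ᗮ

/-- The cone of nonnegative linear combinations of a finite set `Pi`. -/
def posCone (Pi : Finset V) : Set V :=
  {v | ∃ c : V → ℝ, (∀ x, 0 ≤ c x) ∧ v = ∑ x ∈ Pi, c x • x}

/-- The reflection group generated by the reflections in the roots of `Φ`. -/
noncomputable def Wgroup (Φ : Set V) : Subgroup (V ≃ₗᵢ[ℝ] V) :=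
  Subgroup.closure {g | ∃ α ∈ Φ, g = sref α}

/-- The fundamental chamber of the reflection subgroup (given as a set of isometries
`Wsub`), with respect to its positive system inherited from `Φ₊ = Φ ∩ posCone Pi`. -/
def chamber (Φ : Set V) (Pi : Finset V) (Wsub : Set (V ≃ₗᵢ[ℝ] V)) : Set V :=
  {u | ∀ α ∈ Φ, sref α ∈ Wsub → α ∈ posCone Pi → 0 ≤ ⟪u, α⟫}

/-- Pointwise stabilizer in `W` of the first `m` coordinates of the tuple `v`. -/
def stabSet (Φ : Set V) {n : ℕ} (v : Fin n → V) (m : ℕ) : Set (V ≃ₗᵢ[ℝ] V) :=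
  {w | w ∈ Wgroup Φ ∧ ∀ i : Fin n, (i : ℕ) < m → w (v i) = v i}

/-- The fundamental region `C⁽ⁿ⁾` for the diagonal `W`-action on `Vⁿ`. -/
def Cfund (Φ : Set V) (Pi : Finset V) (n : ℕ) : Set (Fin n → V) :=
  {v | ∀ m : Fin n, v m ∈ chamber Φ Pi (stabSet Φ v (m : ℕ))}

section

variable {E : Type*} [NormedAddCommGroup E] [InnerProductSpace ℝ E]

lemma sref_apply (α x : E) : sref α x = x - (2 * ⟪x, α⟫ / ⟪α, α⟫) • α := by
  rw [sref, Submodule.reflection_orthogonal_apply, Submodule.reflection_singleton_apply,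
    real_inner_self_eq_norm_sq, real_inner_comm]
  simp only [RCLike.ofReal_real_eq_id, id]
  module

lemma sref_self (α : E) : sref α α = -α :=
  Submodule.reflection_orthogonalComplement_singleton_eq_neg α

lemma sref_apply_of_inner_eq_zero {α x : E} (h : ⟪x, α⟫ = 0) : sref α x = x := by
  simp [sref_apply, h]

lemma inner_sref_right (u α x : E) :
    ⟪u, sref α x⟫ = ⟪u, x⟫ - 2 * ⟪x, α⟫ / ⟪α, α⟫ * ⟪u, α⟫ := by
  rw [sref_apply, inner_sub_right, real_inner_smul_right]

lemma sref_mem_Wgroup {Φ : Set E} {α : E} (hα : α ∈ Φ) : sref α ∈ Wgroup Φ :=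
  Subgroup.subset_closure ⟨α, hα, rfl⟩

lemma mem_posCone_of_mem {Pi : Finset E} {x : E} (hx : x ∈ Pi) : x ∈ posCone Pi := by
  classical
  refine ⟨fun z => if z = x then 1 else 0, fun z => by positivity, ?_⟩
  simp [Finset.sum_ite_eq', hx]

lemma inner_nonneg_of_mem_posCone {Pi : Finset E} {v u : E} (hv : ∀ α ∈ Pi, 0 ≤ ⟪v, α⟫)
    (hu : u ∈ posCone Pi) : 0 ≤ ⟪v, u⟫ := by
  obtain ⟨c, hc, rfl⟩ := hu
  rw [inner_sum]
  exact Finset.sum_nonneg fun x hx => by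
    rw [real_inner_smul_right]; exact mul_nonneg (hc x) (hv x hx)

lemma inner_nonneg_of_mem_Cfund {Φ : Set E} {Pi : Finset E} {n : ℕ} {v : Fin n → E}
    (hv : v ∈ Cfund Φ Pi n) (m : Fin n) {α : E} (hα : α ∈ Φ) (hpos : α ∈ posCone Pi)
    (horth : ∀ i : Fin n, i < m → ⟪v i, α⟫ = 0) : 0 ≤ ⟪v m, α⟫ :=
  hv m α hα ⟨sref_mem_Wgroup hα, fun i hi => sref_apply_of_inner_eq_zero (horth i hi)⟩ hpos

lemma coeff_eq_of_sum_smul_eq {Pi : Finset E}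
    (hind : LinearIndependent ℝ (fun x : {x : E // x ∈ Pi} => (x : E)))
    {c d : E → ℝ} (h : ∑ x ∈ Pi, c x • x = ∑ x ∈ Pi, d x • x) {x : E} (hx : x ∈ Pi) :
    c x = d x := by
  rw [← Finset.sum_coe_sort Pi, ← Finset.sum_coe_sort Pi] at h
  exact hind.eq_coords_of_eq (f := fun i => c i) (g := fun i => d i) h ⟨x, hx⟩

lemma exists_coeff_pos_and_inner_pos {Pi : Finset E} {c : E → ℝ} (hc : ∀ x, 0 ≤ c x)
    {β : E} (hβ : β = ∑ x ∈ Pi, c x • x) (hβ0 : β ≠ 0) :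
    ∃ x ∈ Pi, 0 < c x ∧ 0 < ⟪β, x⟫ := by
  have hsum : ⟪β, β⟫ = ∑ x ∈ Pi, c x * ⟪β, x⟫ := by
    nth_rewrite 2 [hβ]
    simp only [inner_sum, real_inner_smul_right]
  have hsum_pos : ∑ _x ∈ Pi, (0 : ℝ) < ∑ x ∈ Pi, c x * ⟪β, x⟫ := by
    rw [Finset.sum_const_zero, ← hsum]
    exact real_inner_self_pos.mpr hβ0
  obtain ⟨x, hx, hpos⟩ := Finset.exists_lt_of_sum_lt hsum_pos
  exact ⟨x, hx, (pos_and_pos_or_neg_and_neg_of_mul_pos hpos).resolve_right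
    fun h => (hc x).not_gt h.1⟩

lemma exists_coeff_pos_of_ne {Φ : Set E} {Pi : Finset E}
    (hred : ∀ α ∈ Φ, ∀ c : ℝ, c • α ∈ Φ → c = 1 ∨ c = -1) (hPiΦ : (Pi : Set E) ⊆ Φ)
    {c : E → ℝ} (hc : ∀ x, 0 ≤ c x) {β : E} (hβΦ : β ∈ Φ) (hβ : β = ∑ x ∈ Pi, c x • x)
    (hβPi : β ∉ Pi) {x : E} (hx : x ∈ Pi) : ∃ y ∈ Pi, y ≠ x ∧ 0 < c y := by
  by_contra! h
  have hβx : β = c x • x := by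
    rw [hβ, Finset.sum_eq_single_of_mem x hx fun y hy hyx => by
      rw [le_antisymm (h y hy hyx) (hc y), zero_smul]]
  rcases hred x (hPiΦ hx) (c x) (hβx ▸ hβΦ) with h1 | h1
  · exact hβPi (by rwa [hβx, h1, one_smul])
  · linarith [hc x]

lemma sub_smul_mem_posCone {Φ : Set E} {Pi : Finset E}
    (hind : LinearIndependent ℝ (fun x : {x : E // x ∈ Pi} => (x : E)))
    (hsplit : ∀ β ∈ Φ, β ∈ posCone Pi ∨ -β ∈ posCone Pi)
    {c : E → ℝ} {β x y : E} (hβ : β = ∑ z ∈ Pi, c z • z) (hx : x ∈ Pi) (hy : y ∈ Pi)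
    (hyx : y ≠ x) (hcy : 0 < c y) {t : ℝ} (ht : β - t • x ∈ Φ) :
    β - t • x ∈ posCone Pi := by
  classical
  refine (hsplit _ ht).resolve_right ?_
  rintro ⟨d, hd, hdeq⟩
  have key : ∑ z ∈ Pi, (d z + c z) • z = ∑ z ∈ Pi, (if z = x then t else 0) • z := by
    simp only [add_smul, Finset.sum_add_distrib, ← hdeq, ← hβ, ite_smul, zero_smul,
      Finset.sum_ite_eq', if_pos hx]
    abel
  have hcoeff := coeff_eq_of_sum_smul_eq hind key hy
  rw [if_neg hyx] at hcoeff
  linarith [hd y]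

lemma sref_mem_posCone {Φ : Set E} {Pi : Finset E}
    (hrefl : ∀ α ∈ Φ, ∀ β ∈ Φ, sref α β ∈ Φ)
    (hred : ∀ α ∈ Φ, ∀ c : ℝ, c • α ∈ Φ → c = 1 ∨ c = -1) (hPiΦ : (Pi : Set E) ⊆ Φ)
    (hind : LinearIndependent ℝ (fun x : {x : E // x ∈ Pi} => (x : E)))
    (hsplit : ∀ β ∈ Φ, β ∈ posCone Pi ∨ -β ∈ posCone Pi)
    {β x : E} (hβΦ : β ∈ Φ) (hβ : β ∈ posCone Pi) (hβPi : β ∉ Pi) (hx : x ∈ Pi) :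
    sref x β ∈ posCone Pi := by
  obtain ⟨c, hc, hβc⟩ := hβ
  obtain ⟨y, hy, hyx, hcy⟩ := exists_coeff_pos_of_ne hred hPiΦ hc hβΦ hβc hβPi hx
  have hmem := hrefl x (hPiΦ hx) β hβΦ
  rw [sref_apply] at hmem ⊢
  exact sub_smul_mem_posCone hind hsplit hβc hx hy hyx hcy hmem

lemma le_two_mul_inner {Φ : Set E} (h0 : (0 : E) ∉ Φ)
    (hcrys : ∀ α ∈ Φ, ∀ β ∈ Φ, ∃ k : ℤ, 2 * ⟪α, β⟫ / ⟪β, β⟫ = (k : ℝ))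
    {α β : E} (hα : α ∈ Φ) (hβ : β ∈ Φ) (hpos : 0 < ⟪α, β⟫) : ⟪β, β⟫ ≤ 2 * ⟪α, β⟫ := by
  obtain ⟨k, hk⟩ := hcrys α hα β hβ
  have hβ0 : 0 < ⟪β, β⟫ := real_inner_self_pos.mpr (ne_of_mem_of_not_mem hβ h0)
  have hk1 : (1 : ℝ) ≤ k := by
    have hk0 : (0 : ℝ) < k := hk ▸ div_pos (by linarith) hβ0
    exact_mod_cast (show (0 : ℤ) < k by exact_mod_cast hk0)
  rw [div_eq_iff hβ0.ne'] at hk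
  nlinarith

theorem mem_of_two_mul_inner_eq {Φ : Set E} {Pi : Finset E} (h0 : (0 : E) ∉ Φ)
    (hrefl : ∀ α ∈ Φ, ∀ β ∈ Φ, sref α β ∈ Φ)
    (hred : ∀ α ∈ Φ, ∀ c : ℝ, c • α ∈ Φ → c = 1 ∨ c = -1) (hPiΦ : (Pi : Set E) ⊆ Φ)
    (hind : LinearIndependent ℝ (fun x : {x : E // x ∈ Pi} => (x : E)))
    (hsplit : ∀ β ∈ Φ, β ∈ posCone Pi ∨ -β ∈ posCone Pi)
    (hcrys : ∀ α ∈ Φ, ∀ β ∈ Φ, ∃ k : ℤ, 2 * ⟪α, β⟫ / ⟪β, β⟫ = (k : ℝ))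
    {v β : E} (hvΦ : v ∈ Φ) (hdom : ∀ α ∈ Φ, α ∈ posCone Pi → 0 ≤ ⟪v, α⟫)
    (hβΦ : β ∈ Φ) (hβ : β ∈ posCone Pi) (hββ : ⟪β, β⟫ = ⟪v, v⟫) (hvβ : 2 * ⟪v, β⟫ = ⟪v, v⟫)
    (hstab : ∀ α ∈ Φ, α ∈ posCone Pi → ⟪v, α⟫ = 0 → ⟪β, α⟫ ≤ 0) : β ∈ Pi := by
  by_contra hβPi
  obtain ⟨c, hc, hβc⟩ := id hβ
  obtain ⟨x, hx, -, hβx⟩ :=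
    exists_coeff_pos_and_inner_pos hc hβc (ne_of_mem_of_not_mem hβΦ h0)
  have hxΦ := hPiΦ hx
  have hxpos := mem_posCone_of_mem hx
  rcases (hdom x hxΦ hxpos).eq_or_lt with hvx | hvx
  · linarith [hstab x hxΦ hxpos hvx.symm]
  set r := 2 * ⟪β, x⟫ / ⟪x, x⟫ with hr
  have hxx : 0 < ⟪x, x⟫ := real_inner_self_pos.mpr (ne_of_mem_of_not_mem hxΦ h0)
  have hr1 : 1 ≤ r := by
    rw [hr, le_div_iff₀ hxx, one_mul]
    exact le_two_mul_inner h0 hcrys hβΦ hxΦ hβx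
  have hvx2 : ⟪v, v⟫ ≤ 2 * ⟪v, x⟫ := by
    simpa only [real_inner_comm x v] using
      le_two_mul_inner h0 hcrys hxΦ hvΦ (by rwa [real_inner_comm])
  have hxx2 : ⟪x, x⟫ ≤ 2 * ⟪v, x⟫ := le_two_mul_inner h0 hcrys hvΦ hxΦ hvx
  have hsxΦ : sref x β ∈ Φ := hrefl x hxΦ β hβΦ
  have hsxpos := sref_mem_posCone hrefl hred hPiΦ hind hsplit hβΦ hβ hβPi hx
  have hvsx : ⟪v, sref x β⟫ = ⟪v, β⟫ - r * ⟪v, x⟫ := inner_sref_right v x β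
  have hβsx : ⟪β, sref x β⟫ = ⟪β, β⟫ - r * ⟪β, x⟫ := inner_sref_right β x β
  have hrvx : ⟪v, x⟫ ≤ r * ⟪v, x⟫ := le_mul_of_one_le_left hvx.le hr1
  have horth : ⟪v, sref x β⟫ = 0 := by linarith [hdom _ hsxΦ hsxpos]
  have hr_eq : r = 1 := by
    have hrvx' : r * ⟪v, x⟫ ≤ 1 * ⟪v, x⟫ := by linarith
    exact le_antisymm ((mul_le_mul_iff_of_pos_right hvx).mp hrvx') hr1
  have hxx_eq : ⟪x, x⟫ = 2 * ⟪β, x⟫ := by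
    rw [hr_eq, eq_div_iff hxx.ne', one_mul] at hr
    exact hr
  rw [hr_eq] at hvsx hβsx
  linarith [hstab _ hsxΦ hsxpos horth]

end

theorem pair_in_fund_region_A2_general (Φ : Set V) (Pi : Finset V)
    (h0 : (0 : V) ∉ Φ)
    (hrefl : ∀ α ∈ Φ, ∀ β ∈ Φ, sref α β ∈ Φ)
    (hred : ∀ α ∈ Φ, ∀ c : ℝ, c • α ∈ Φ → c = 1 ∨ c = -1)
    (hPiΦ : (Pi : Set V) ⊆ Φ)
    (hind : LinearIndependent ℝ (fun x : {x : V // x ∈ Pi} => (x : V)))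
    (hsplit : ∀ β ∈ Φ, β ∈ posCone Pi ∨ -β ∈ posCone Pi)
    -- crystallographic
    (hcrys : ∀ α ∈ Φ, ∀ β ∈ Φ, ∃ k : ℤ, 2 * ⟪α, β⟫ / ⟪β, β⟫ = (k : ℝ))
    (v w : V) (hvΦ : v ∈ Φ) (hwΦ : w ∈ Φ)
    (hmem : ![v, w] ∈ Cfund Φ Pi 2) :
    (∀ α ∈ Pi, 0 ≤ ⟪v, α⟫) ∧
      ((2 * ⟪v, w⟫ / ⟪v, v⟫ = -1 ∧ 2 * ⟪w, v⟫ / ⟪w, w⟫ = -1) → -w ∈ Pi) := by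
  have hdom : ∀ α ∈ Φ, α ∈ posCone Pi → 0 ≤ ⟪v, α⟫ := fun α hα hpos =>
    inner_nonneg_of_mem_Cfund hmem 0 hα hpos fun i hi => absurd hi (Fin.not_lt_zero i)
  have hdomPi : ∀ α ∈ Pi, 0 ≤ ⟪v, α⟫ := fun α hα => hdom α (hPiΦ hα) (mem_posCone_of_mem hα)
  refine ⟨hdomPi, fun ⟨hvw, hwv⟩ => ?_⟩
  have hvv : 0 < ⟪v, v⟫ := real_inner_self_pos.mpr (ne_of_mem_of_not_mem hvΦ h0)
  have hww : 0 < ⟪w, w⟫ := real_inner_self_pos.mpr (ne_of_mem_of_not_mem hwΦ h0)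
  rw [div_eq_iff hvv.ne'] at hvw
  rw [div_eq_iff hww.ne', real_inner_comm] at hwv
  have hnegΦ : -w ∈ Φ := sref_self w ▸ hrefl w hwΦ w hwΦ
  have hnegpos : -w ∈ posCone Pi := (hsplit w hwΦ).resolve_left fun hw => by
    linarith [inner_nonneg_of_mem_posCone hdomPi hw]
  refine mem_of_two_mul_inner_eq h0 hrefl hred hPiΦ hind hsplit hcrys hvΦ hdom hnegΦ hnegpos
    (by rw [inner_neg_neg]; linarith) (by rw [inner_neg_right]; linarith)
    fun α hα hpos horth => ?_
  have hwα := inner_nonneg_of_mem_Cfund hmem 1 hα hpos fun i hi => by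
    obtain rfl : i = 0 := by omega
    simpa using horth
  rw [inner_neg_left]
  simpa using hwα

/-- Let `Φ` be crystallographic and `(v, w) ∈ C⁽²⁾` with `v, w` roots. If
`⟪v,w⟫ ≠ 0` and `v, w` are linearly independent, then `v` is a dominant root, and if
the Cartan matrix of `(v, w)` is the `A₂` Cartan matrix then `w` is the negative of a
simple root. -/
theorem pair_in_fund_region_A2 (Φ : Set V) (Pi : Finset V)
    (hfin : Φ.Finite) (h0 : (0 : V) ∉ Φ)
    (hrefl : ∀ α ∈ Φ, ∀ β ∈ Φ, sref α β ∈ Φ)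
    (hred : ∀ α ∈ Φ, ∀ c : ℝ, c • α ∈ Φ → c = 1 ∨ c = -1)
    (hPiΦ : (Pi : Set V) ⊆ Φ)
    (hind : LinearIndependent ℝ (fun x : {x : V // x ∈ Pi} => (x : V)))
    (hsplit : ∀ β ∈ Φ, β ∈ posCone Pi ∨ -β ∈ posCone Pi)
    -- crystallographic
    (hcrys : ∀ α ∈ Φ, ∀ β ∈ Φ, ∃ k : ℤ, 2 * ⟪α, β⟫ / ⟪β, β⟫ = (k : ℝ))
    (v w : V) (hvΦ : v ∈ Φ) (hwΦ : w ∈ Φ)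
    (hmem : ![v, w] ∈ Cfund Φ Pi 2)
    (hne : ⟪v, w⟫ ≠ 0) (hindep : ∀ c : ℝ, w ≠ c • v) :
    (∀ α ∈ Pi, 0 ≤ ⟪v, α⟫) ∧
      ((2 * ⟪v, w⟫ / ⟪v, v⟫ = -1 ∧ 2 * ⟪w, v⟫ / ⟪w, w⟫ = -1) → -w ∈ Pi) :=
  pair_in_fund_region_A2_general Φ Pi h0 hrefl hred hPiΦ hind hsplit hcrys v w hvΦ hwΦ hmem
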